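/- arXiv:2601.00817 — 9 statements merged into one kernel-verified Lean document; each statement's English description precedes it below -/
import Mathlib

section
/- Let $A$ be an $n \times m$ integer matrix and $b$ a rational $n$-tuple with all entries $a_{i,j}, b_i$ in $[-k,k]$ for a positive integer $k$. If the system $Ax \le b$ has a real solution, then it has a rational solution $x$ with every coordinate $x_i \in [-(mk)^m, (mk)^m]$. -/
/-!
Among the real solutions of `A x ≤ b` pick one, `z`, whose set `T` of active constraints is
maximal. Then every real solution of the equations `A_T y = b_T` satisfies all of `A y ≤ b`:
otherwise, walking from `z` towards `y` until the first violated constraint becomes active would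
enlarge `T`. Among the real solutions of `A_T y = b_T` pick one with minimal support `S`; its
columns `A_{T,S}` are linearly independent, so some square submatrix `B` of them is nonsingular,
and Cramer's rule expresses `y_S` as quotients of determinants of rational matrices with entries
in `[-k, k]`. As `det B` is a nonzero integer, `|y_j| ≤ |S|! k^|S| ≤ (mk)^m`.
-/

open Finset

open scoped Nat

theorem Nat.factorial_mul_pow_le_mul_pow {r m k : ℕ} (hr : 0 < r) (hrm : r ≤ m) :
    r ! * k ^ r ≤ (m * k) ^ m := by
  rcases k.eq_zero_or_pos with rfl | hk
  · simp [zero_pow hr.ne']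
  calc r ! * k ^ r ≤ r ^ r * k ^ r := Nat.mul_le_mul_right _ (Nat.factorial_le_pow r)
    _ ≤ (m * k) ^ r := by rw [← mul_pow]; exact Nat.pow_le_pow_left (by gcongr) r
    _ ≤ (m * k) ^ m := Nat.pow_le_pow_right (Nat.mul_pos (hr.trans_le hrm) hk) hrm

theorem exists_add_smul_sub_le_and_eq {ι K : Type*} [Field K] [LinearOrder K]
    [IsStrictOrderedRing K] [Fintype ι] {p q b : ι → K} (hp : p ≤ b) (hq : ∃ i, b i < q i) :
    ∃ t : K, p + t • (q - p) ≤ b ∧ ∃ i, b i < q i ∧ (p + t • (q - p)) i = b i := by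
  classical
  obtain ⟨i₀, hi₀⟩ := hq
  -- `t` is the first time at which the segment from `p` to `q` leaves the region `· ≤ b`.
  obtain ⟨i, hi, hmin⟩ := (univ.filter fun i => b i < q i).exists_min_image
    (fun i => (b i - p i) / (q i - p i)) ⟨i₀, by simpa using hi₀⟩
  simp only [mem_filter, mem_univ, true_and] at hi hmin
  have hpq : ∀ i, b i < q i → 0 < q i - p i := fun i h => by linarith [hp i]
  set t := (b i - p i) / (q i - p i)
  have ht0 : 0 ≤ t := div_nonneg (sub_nonneg.2 (hp i)) (hpq i hi).le
  have ht1 : t ≤ 1 := (div_le_one (hpq i hi)).2 (by linarith)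
  refine ⟨t, fun j => ?_, i, hi, ?_⟩
  · simp only [Pi.add_apply, Pi.smul_apply, Pi.sub_apply, smul_eq_mul]
    by_cases hj : b j < q j
    · have := (le_div_iff₀ (hpq j hj)).1 (hmin j hj)
      linarith
    · push Not at hj
      nlinarith [mul_le_mul_of_nonneg_left (hp j) (sub_nonneg.2 ht1),
        mul_le_mul_of_nonneg_left hj ht0]
  · have := (hpq i hi).ne'
    simp only [Pi.add_apply, Pi.smul_apply, Pi.sub_apply, smul_eq_mul, t]
    field_simp
    ring

namespace Matrix

variable {ι κ K : Type*}

section Field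

variable [Field K] [Fintype κ]

theorem exists_mulVec_eq_linearIndepOn_col_support (M : Matrix ι κ K) {d : ι → K}
    (h : ∃ x, M *ᵥ x = d) :
    ∃ x, M *ᵥ x = d ∧ LinearIndepOn K M.col (Function.support x) := by
  obtain ⟨x, hx : M *ᵥ x = d, hmin⟩ := Set.Finite.exists_minimalFor' Function.support
    {x | M *ᵥ x = d} (Set.toFinite _) h
  refine ⟨x, hx, by_contra fun hdep => ?_⟩
  obtain ⟨c, hcx, hc, hc0⟩ := linearDepOn_iff'.1 hdep
  obtain ⟨j₀, hj₀⟩ := DFunLike.ne_iff.1 hc0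
  have hMc : M *ᵥ c = 0 := by
    simpa [Finsupp.linearCombination_apply, Finsupp.sum_fintype, funext_iff, mulVec, dotProduct,
      Finset.sum_apply, mul_comm] using hc
  set x' := x - (x j₀ / c j₀) • ⇑c
  have hx' : M *ᵥ x' = d := by simp [x', mulVec_sub, mulVec_smul, hMc, hx]
  have hsupp : Function.support x' ⊆ Function.support x := by
    refine Function.support_subset_iff'.2 fun j hxj => ?_
    have hcj : c j = 0 := Finsupp.notMem_support_iff.1 fun hcj => hxj (hcx hcj)
    simp [x', Function.notMem_support.1 hxj, hcj]
  exact hmin hx' hsupp (hcx (Finsupp.mem_support_iff.2 hj₀)) (by simp [x', div_mul_cancel₀ _ hj₀])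

theorem exists_det_submatrix_ne_zero_of_linearIndependent_col [Fintype ι] [DecidableEq κ]
    (M : Matrix ι κ K) (h : LinearIndependent K M.col) :
    ∃ f : κ → ι, (M.submatrix f id).det ≠ 0 := by
  have hspan : Submodule.span K (Set.range M.row) = ⊤ := by
    apply Submodule.eq_top_of_finrank_eq
    rw [← rank_eq_finrank_span_row, rank_eq_finrank_span_cols, finrank_span_eq_card h,
      Module.finrank_fintype_fun_eq_card]
  obtain ⟨κ', a, ha, hspan', hli⟩ := exists_linearIndependent' K M.row
  have : Finite κ' := Finite.of_injective a ha
  have : Fintype κ' := Fintype.ofFinite κ'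
  have hcard : Fintype.card κ = Fintype.card κ' := by
    have := finrank_span_eq_card hli
    rwa [hspan', hspan, finrank_top, Module.finrank_fintype_fun_eq_card] at this
  let e := Fintype.equivOfCardEq hcard
  refine ⟨a ∘ e, ((isUnit_iff_isUnit_det _).1 (linearIndependent_rows_iff_isUnit.1 ?_)).ne_zero⟩
  exact hli.comp e e.injective

end Field

theorem cramer_mulVec [CommRing K] [Fintype κ] [DecidableEq κ] (A : Matrix κ κ K) (x : κ → K) :
    cramer A (A *ᵥ x) = A.det • x := by
  rw [cramer_eq_adjugate_mulVec, mulVec_mulVec, adjugate_mul, smul_mulVec, one_mulVec]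

theorem eq_comp_nonsing_inv_mulVec_of_map_mulVec_eq {L : Type*} [Field K] [Field L]
    [Fintype κ] [DecidableEq κ] (f : K →+* L) {B : Matrix κ κ K} (hB : B.det ≠ 0) {d : κ → K}
    {x : κ → L} (hx : B.map f *ᵥ x = f ∘ d) : x = f ∘ (B⁻¹ *ᵥ d) := by
  have hBf : IsUnit (B.map f) := by
    rw [isUnit_iff_isUnit_det, ← RingHom.mapMatrix_apply, ← f.map_det]
    exact f.isUnit_map (isUnit_iff_ne_zero.2 hB)
  refine mulVec_injective_of_isUnit hBf (hx.trans (funext fun i => ?_))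
  rw [Function.comp_apply, ← RingHom.map_mulVec, mulVec_mulVec,
    mul_nonsing_inv _ (isUnit_iff_ne_zero.2 hB), one_mulVec]

section LinearOrderedField

variable [Field K] [LinearOrder K] [IsStrictOrderedRing K]

theorem abs_le_factorial_mul_pow_of_intCast_mulVec_eq [Fintype κ] [DecidableEq κ]
    {B : Matrix κ κ ℤ} (hB : B.det ≠ 0) {k : ℕ} (hBk : ∀ i j, |B i j| ≤ k) {d y : κ → K}
    (hd : ∀ i, |d i| ≤ k) (hy : B.map (↑) *ᵥ y = d) (j : κ) :
    |y j| ≤ (Fintype.card κ)! * (k : K) ^ Fintype.card κ := by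
  have hdet : (1 : K) ≤ |(B.map (↑)).det| := by
    rw [← Int.cast_det, ← Int.cast_abs]
    exact_mod_cast Int.one_le_abs hB
  have hcramer : |cramer (B.map (↑)) d j| ≤ (Fintype.card κ)! * (k : K) ^ Fintype.card κ := by
    rw [cramer_apply, ← nsmul_eq_mul]
    refine det_le (abv := AbsoluteValue.abs) fun i i' => ?_
    rw [updateCol_apply]
    split_ifs
    · exact hd i
    · simpa [← Int.cast_abs] using (Int.cast_le (R := K)).2 (hBk i i')
  calc |y j| ≤ |(B.map (↑)).det| * |y j| := le_mul_of_one_le_left (abs_nonneg _) hdet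
    _ = |cramer (B.map (↑)) d j| := by
      rw [← hy, cramer_mulVec, Pi.smul_apply, smul_eq_mul, abs_mul]
    _ ≤ _ := hcramer

def activeSet [Fintype κ] (M : Matrix ι κ K) (b : ι → K) (x : κ → K) : Set ι :=
  {i | (M *ᵥ x) i = b i}

theorem exists_mulVec_le_forall_eqOn_activeSet [Fintype ι] [Fintype κ] (M : Matrix ι κ K)
    (b : ι → K) (h : ∃ x, M *ᵥ x ≤ b) :
    ∃ z, M *ᵥ z ≤ b ∧ ∀ y, Set.EqOn (M *ᵥ y) b (activeSet M b z) → M *ᵥ y ≤ b := by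
  obtain ⟨z, hz : M *ᵥ z ≤ b, hmax⟩ :=
    Set.Finite.exists_maximalFor' (activeSet M b) {x | M *ᵥ x ≤ b} (Set.toFinite _) h
  refine ⟨z, hz, fun y hy => by_contra fun hyb => ?_⟩
  obtain ⟨t, ht, i, hbi, hti⟩ :=
    exists_add_smul_sub_le_and_eq hz (by simpa [Pi.le_def] using hyb)
  have hw : M *ᵥ (z + t • (y - z)) = M *ᵥ z + t • (M *ᵥ y - M *ᵥ z) := by
    rw [mulVec_add, mulVec_smul, mulVec_sub]
  have hsub : activeSet M b z ⊆ activeSet M b (z + t • (y - z)) := fun j hj => by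
    simp only [activeSet, Set.mem_ofPred_eq] at hj ⊢
    simp [hw, hj, hy hj]
  have hiz := hmax (show M *ᵥ (z + t • (y - z)) ≤ b by rwa [hw]) hsub
    (show _ = b i by rw [hw]; exact hti)
  exact hbi.ne' (hy hiz)

end LinearOrderedField

variable [Fintype ι] [Fintype κ] [DecidableEq κ]

theorem exists_ratCast_eq_abs_le_of_linearIndepOn_col_support {C : Matrix ι κ ℤ} {d : ι → ℚ}
    {k : ℕ} (hC : ∀ i j, |C i j| ≤ k) (hd : ∀ i, |d i| ≤ k) {x : κ → ℝ}
    (hx : C.map (↑) *ᵥ x = fun i => (d i : ℝ))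
    (hli : LinearIndepOn ℝ (C.map (Int.cast : ℤ → ℝ)).col (Function.support x)) (j : κ) :
    ∃ q : ℚ, x j = q ∧ |q| ≤ ((Fintype.card κ * k : ℕ) : ℚ) ^ Fintype.card κ := by
  classical
  by_cases hj : x j = 0
  · exact ⟨0, by simpa using hj, by rw [abs_zero]; positivity⟩
  set S := Function.support x
  obtain ⟨f, hf⟩ := exists_det_submatrix_ne_zero_of_linearIndependent_col
    ((C.map (Int.cast : ℤ → ℝ)).submatrix id (Subtype.val : S → κ)) hli
  set B : Matrix S S ℤ := C.submatrix f Subtype.val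
  have hB : B.det ≠ 0 := by
    rw [← Int.cast_ne_zero (α := ℝ), Int.cast_det]
    exact hf
  have hBx : B.map (↑) *ᵥ (x ∘ Subtype.val) = fun s => (d (f s) : ℝ) := by
    funext s
    rw [← congrFun hx (f s)]
    simp only [mulVec, dotProduct]
    rw [← Fintype.sum_subtype_add_sum_subtype (· ∈ S),
      Fintype.sum_eq_zero (fun j : {j // j ∉ S} => _) fun j => by
        rw [Function.notMem_support.1 j.2, mul_zero], add_zero]
    rfl
  have hxq : x ∘ Subtype.val = Rat.cast ∘ ((B.map (↑))⁻¹ *ᵥ (d ∘ f)) :=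
    eq_comp_nonsing_inv_mulVec_of_map_mulVec_eq (Rat.castHom ℝ)
      (by rwa [← Int.cast_det, Int.cast_ne_zero]) (by convert hBx using 2 <;> (try ext) <;> simp)
  refine ⟨_, congrFun hxq ⟨j, hj⟩, ?_⟩
  have hbound := abs_le_factorial_mul_pow_of_intCast_mulVec_eq hB (fun _ _ => hC _ _)
    (fun s => by simpa [← Rat.cast_abs] using hd (f s)) hBx ⟨j, hj⟩
  rw [hxq, Function.comp_apply] at hbound
  have hnat : ((Fintype.card S)! * k ^ Fintype.card S : ℝ) ≤
      ((Fintype.card κ * k : ℕ) : ℝ) ^ Fintype.card κ := by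
    exact_mod_cast Nat.factorial_mul_pow_le_mul_pow (Fintype.card_pos_iff.2 ⟨(⟨j, hj⟩ : S)⟩)
      (Fintype.card_le_of_injective _ Subtype.val_injective)
  exact_mod_cast hbound.trans hnat

theorem exists_rat_mulVec_eq_abs_le {C : Matrix ι κ ℤ} {d : ι → ℚ} {k : ℕ}
    (hC : ∀ i j, |C i j| ≤ k) (hd : ∀ i, |d i| ≤ k)
    (h : ∃ x : κ → ℝ, C.map (↑) *ᵥ x = fun i => (d i : ℝ)) :
    ∃ y : κ → ℚ, C.map (↑) *ᵥ y = d ∧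
      ∀ j, |y j| ≤ ((Fintype.card κ * k : ℕ) : ℚ) ^ Fintype.card κ := by
  obtain ⟨x, hx, hli⟩ := exists_mulVec_eq_linearIndepOn_col_support (C.map (Int.cast : ℤ → ℝ)) h
  choose y hxy hy using exists_ratCast_eq_abs_le_of_linearIndepOn_col_support hC hd hx hli
  refine ⟨y, funext fun i => Rat.cast_injective (α := ℝ) ?_, hy⟩
  have := congrFun hx i
  simp only [mulVec, dotProduct, map_apply, hxy] at this ⊢
  push_cast
  exact this

end Matrix

theorem small_rational_solution_of_linear_system_general
    (n m k : ℕ)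
    (A : Matrix (Fin n) (Fin m) ℤ) (b : Fin n → ℚ)
    (hA : ∀ i j, |A i j| ≤ (k : ℤ)) (hb : ∀ i, |b i| ≤ (k : ℚ))
    (hsol : ∃ x : Fin m → ℝ, ∀ i, ∑ j, (A i j : ℝ) * x j ≤ (b i : ℝ)) :
    ∃ x : Fin m → ℚ, (∀ i, ∑ j, (A i j : ℚ) * x j ≤ b i) ∧
      ∀ j, |x j| ≤ ((m * k : ℕ) : ℚ) ^ m := by
  classical
  obtain ⟨z, -, hface⟩ :=
    Matrix.exists_mulVec_le_forall_eqOn_activeSet (A.map (Int.cast : ℤ → ℝ)) (fun i => (b i : ℝ))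
      hsol
  obtain ⟨y, hy, hbound⟩ := Matrix.exists_rat_mulVec_eq_abs_le
    (C := A.submatrix (Subtype.val : (A.map (↑)).activeSet (fun i => (b i : ℝ)) z → Fin n) id)
    (d := fun i => b i) (fun _ _ => hA _ _) (fun _ => hb _) ⟨z, funext fun i => i.2⟩
  refine ⟨y, fun i => ?_, by simpa using hbound⟩
  have hyi := hface (fun j => (y j : ℝ)) (fun i hi => by
    simpa [Matrix.mulVec, dotProduct] using congrArg (Rat.cast : ℚ → ℝ) (congrFun hy ⟨i, hi⟩)) i
  simp only [Matrix.mulVec, dotProduct, Matrix.map_apply] at hyi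
  exact_mod_cast hyi

theorem small_rational_solution_of_linear_system
    (n m k : ℕ) (hn : 0 < n) (hm : 0 < m) (hk : 0 < k)
    (A : Matrix (Fin n) (Fin m) ℤ) (b : Fin n → ℚ)
    (hA : ∀ i j, |A i j| ≤ (k : ℤ)) (hb : ∀ i, |b i| ≤ (k : ℚ))
    (hsol : ∃ x : Fin m → ℝ, ∀ i, ∑ j, (A i j : ℝ) * x j ≤ (b i : ℝ)) :
    ∃ x : Fin m → ℚ, (∀ i, ∑ j, (A i j : ℚ) * x j ≤ b i) ∧
      ∀ j, |x j| ≤ ((m * k : ℕ) : ℚ) ^ m :=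
  small_rational_solution_of_linear_system_general n m k A b hA hb hsol
end

section
/- If a finite system consisting of linear equations $Ax = c$ and strict linear inequalities $Bx < d$ (with rational coefficients) has a real solution, then there is a rational vector $d'$ with $d_i - 1 \le d_i' < d_i$ for each $i$ such that the system $Ax = c$, $Bx \le d'$ has a real solution, and every solution of the latter system solves the former. -/
open Finset

theorem relax_strict_inequalities
    (n₁ n₂ m : ℕ)
    (A : Matrix (Fin n₁) (Fin m) ℚ) (c : Fin n₁ → ℚ)
    (B : Matrix (Fin n₂) (Fin m) ℚ) (d : Fin n₂ → ℚ)
    (hsol : ∃ x : Fin m → ℝ,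
      (∀ i, ∑ j, (A i j : ℝ) * x j = (c i : ℝ)) ∧
      (∀ i, ∑ j, (B i j : ℝ) * x j < (d i : ℝ))) :
    ∃ d' : Fin n₂ → ℚ,
      (∀ i, d i - 1 ≤ d' i ∧ d' i < d i) ∧
      (∃ x : Fin m → ℝ,
        (∀ i, ∑ j, (A i j : ℝ) * x j = (c i : ℝ)) ∧
        (∀ i, ∑ j, (B i j : ℝ) * x j ≤ (d' i : ℝ))) ∧
      (∀ x : Fin m → ℝ,
        ((∀ i, ∑ j, (A i j : ℝ) * x j = (c i : ℝ)) ∧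
         (∀ i, ∑ j, (B i j : ℝ) * x j ≤ (d' i : ℝ))) →
        ((∀ i, ∑ j, (A i j : ℝ) * x j = (c i : ℝ)) ∧
         (∀ i, ∑ j, (B i j : ℝ) * x j < (d i : ℝ)))) := by
  obtain ⟨x, hA, hB⟩ := hsol
  have h : ∀ i : Fin n₂, ∃ q : ℚ,
      max ((d i : ℝ) - 1) (∑ j, (B i j : ℝ) * x j) < (q : ℝ) ∧ (q : ℝ) < (d i : ℝ) := by
    intro i
    exact exists_rat_btwn (max_lt (by linarith) (hB i))
  choose d' hd1 hd2 using h
  refine ⟨d', ?_, ⟨x, hA, ?_⟩, ?_⟩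
  · intro i
    constructor
    · have := le_of_lt (lt_of_le_of_lt (le_max_left _ _) (hd1 i))
      have : ((d i - 1 : ℚ) : ℝ) ≤ ((d' i : ℚ) : ℝ) := by push_cast; linarith
      exact_mod_cast this
    · exact_mod_cast hd2 i
  · intro i
    exact le_of_lt (lt_of_le_of_lt (le_max_right _ _) (hd1 i))
  · rintro y ⟨hyA, hyB⟩
    exact ⟨hyA, fun i => lt_of_le_of_lt (hyB i) (hd2 i)⟩
end

section
/- Let $a, b \in [1/2 - 1/2^{k-l+2}, 1/2 + 1/2^{k-l+2}]$ for nonnegative integers $l \le k$, and suppose $a + b \ge 1$. Then in the standard MV-algebra, $((a \oplus b) \otimes (1/2 \oplus (a \otimes b))) = a + b - 1/2$, where $x \oplus y = \min(1, x+y)$ and $x \otimes y = \max(0, x+y-1)$. -/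
theorem mv_addition_case_ge_one (k l : ℕ) (hlk : l ≤ k) (a b : ℝ)
    (ha : a ∈ Set.Icc (1 / 2 - 1 / 2 ^ (k - l + 2) : ℝ) (1 / 2 + 1 / 2 ^ (k - l + 2)))
    (hb : b ∈ Set.Icc (1 / 2 - 1 / 2 ^ (k - l + 2) : ℝ) (1 / 2 + 1 / 2 ^ (k - l + 2)))
    (hab : 1 ≤ a + b) :
    max 0 (min 1 (a + b) + min 1 (1 / 2 + max 0 (a + b - 1)) - 1) = a + b - 1 / 2 := by
  have hp : (1 / 2 ^ (k - l + 2) : ℝ) ≤ 1 / 4 := by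
    have : (4:ℝ) = 2 ^ 2 := by norm_num
    rw [this]
    apply div_le_div_of_nonneg_left (by norm_num) (by positivity)
    exact pow_le_pow_right₀ (by norm_num) (by omega)
  obtain ⟨_, ha2⟩ := ha
  obtain ⟨_, hb2⟩ := hb
  have h32 : a + b ≤ 3 / 2 := by linarith
  rw [max_eq_right (by linarith : (0:ℝ) ≤ a + b - 1), min_eq_left hab,
    min_eq_right (by linarith : (1:ℝ)/2 + (a + b - 1) ≤ 1), max_eq_right (by linarith)]
  ring
end

section
/- Let $a, b \in [1/2 - 1/2^{k-l+2}, 1/2 + 1/2^{k-l+2}]$ for nonnegative integers $l \le k$, and suppose $a + b \le 1$. Then in the standard MV-algebra, $((a \oplus b) \otimes (1/2 \oplus (a \otimes b))) = a + b - 1/2$, where $x \oplus y = \min(1, x+y)$ and $x \otimes y = \max(0, x+y-1)$. -/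
theorem mv_addition_case_le_one (k l : ℕ) (hlk : l ≤ k) (a b : ℝ)
    (ha : a ∈ Set.Icc (1 / 2 - 1 / 2 ^ (k - l + 2) : ℝ) (1 / 2 + 1 / 2 ^ (k - l + 2)))
    (hb : b ∈ Set.Icc (1 / 2 - 1 / 2 ^ (k - l + 2) : ℝ) (1 / 2 + 1 / 2 ^ (k - l + 2)))
    (hab : a + b ≤ 1) :
    max 0 (min 1 (a + b) + min 1 (1 / 2 + max 0 (a + b - 1)) - 1) = a + b - 1 / 2 := by
  obtain ⟨ha1, ha2⟩ := ha
  obtain ⟨hb1, hb2⟩ := hb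
  have hp : (1 / 2 ^ (k - l + 2) : ℝ) ≤ 1 / 4 := by
    rw [div_le_div_iff₀ (by positivity) (by norm_num)]
    calc (1:ℝ) * 2 ^ (k - l + 2) = 2 ^ (k-l) * 4 := by ring
    _ ≥ 1 * 4 := by nlinarith [one_le_pow₀ (by norm_num : (1:ℝ) ≤ 2) (n := k - l)]
  rw [min_eq_right hab, max_eq_left (by linarith : a + b - 1 ≤ 0), add_zero,
    min_eq_right (by norm_num : (1/2:ℝ) ≤ 1), max_eq_right (by linarith)]
  ring
end

section
/- Let $\tau$ be the translation from abelian $\ell$-group terms to MV-terms with constant $1/2$ defined by: $\tau(x) = x$, $\tau(0) = 1/2$, $\tau(-\phi) = \neg\tau(\phi)$, $\tau(\phi+\psi) = (\tau(\phi) \oplus \tau(\psi)) \otimes (1/2 \oplus (\tau(\phi) \otimes \tau(\psi)))$, $\tau(\phi \lor \psi) = \tau(\phi) \lor \tau(\psi)$, $\tau(\phi \land \psi) = \tau(\phi) \land \tau(\psi)$. Fix nonnegative integers $M, k$ and let $r_{M,k}(a) = a/2^{M+k+1} + 1/2$. Then for every $\ell$-group term $\phi(x_1,\dots,x_n)$ of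 depth $l \le k$ and all $a_1,\dots,a_n \in [-2^M, 2^M]$: $f_{\tau(\phi)}(r_{M,k}(a_1),\dots,r_{M,k}(a_n)) = r_{M,k}(f_\phi(a_1,\dots,a_n))$, and moreover $r_{M,k}(f_\phi(a_1,\dots,a_n)) \in [1/2 - 1/2^{k-l+1}, 1/2 + 1/2^{k-l+1}]$. -/
/-- Terms of abelian ℓ-groups in `n` variables. -/
inductive AbTerm (n : ℕ) where
  | var  : Fin n → AbTerm n
  | zero : AbTerm n
  | neg  : AbTerm n → AbTerm n
  | add  : AbTerm n → AbTerm n → AbTerm n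
  | inf  : AbTerm n → AbTerm n → AbTerm n
  | sup  : AbTerm n → AbTerm n → AbTerm n

namespace AbTerm

/-- Depth of a term. -/
def depth {n : ℕ} : AbTerm n → ℕ
  | var _ => 0
  | zero => 0
  | neg φ => φ.depth + 1
  | add φ ψ => max φ.depth ψ.depth + 1
  | inf φ ψ => max φ.depth ψ.depth + 1
  | sup φ ψ => max φ.depth ψ.depth + 1

/-- The term function `f_φ` on the ℓ-group `⟨ℝ, +, -, min, max, 0⟩`. -/
noncomputable def evalR {n : ℕ} : AbTerm n → (Fin n → ℝ) → ℝ
  | var i, v => v i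
  | zero, _ => 0
  | neg φ, v => -(φ.evalR v)
  | add φ ψ, v => φ.evalR v + ψ.evalR v
  | inf φ ψ, v => min (φ.evalR v) (ψ.evalR v)
  | sup φ ψ, v => max (φ.evalR v) (ψ.evalR v)

/-- The term function `f_{τ(φ)}` of the translated term on the standard
MV-algebra with constant `1/2` (computed compositionally, following the
clauses of the translation `τ`). -/
noncomputable def tauEval {n : ℕ} : AbTerm n → (Fin n → ℝ) → ℝ
  | var i, v => v i
  | zero, _ => 1 / 2
  | neg φ, v => 1 - φ.tauEval v
  | add φ ψ, v =>
      max 0 (min 1 (φ.tauEval v + ψ.tauEval v) +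
        min 1 (1 / 2 + max 0 (φ.tauEval v + ψ.tauEval v - 1)) - 1)
  | inf φ ψ, v => min (φ.tauEval v) (ψ.tauEval v)
  | sup φ ψ, v => max (φ.tauEval v) (ψ.tauEval v)

end AbTerm

private lemma key_add {s : ℝ} (h1 : -(1/2) ≤ s) (h2 : s ≤ 1/2) :
    max 0 (min 1 (s + 1) + min 1 (1 / 2 + max 0 (s + 1 - 1)) - 1) = s + 1 / 2 := by
  rcases le_total s 0 with h | h
  · have m2 : max (0:ℝ) (s + 1 - 1) = 0 := max_eq_left (by linarith)
    have m1 : min (1:ℝ) (s + 1) = s + 1 := min_eq_right (by linarith)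
    rw [m2, m1]
    have m3 : min (1:ℝ) (1/2 + 0) = 1/2 := by norm_num
    rw [m3]
    have : s + 1 + 1/2 - 1 = s + 1/2 := by ring
    rw [this]
    exact max_eq_right (by linarith)
  · have m2 : max (0:ℝ) (s + 1 - 1) = s := by
      rw [max_eq_right (by linarith)]; ring
    have m1 : min (1:ℝ) (s + 1) = 1 := min_eq_left (by linarith)
    rw [m2, m1]
    have m3 : min (1:ℝ) (1/2 + s) = 1/2 + s := min_eq_right (by linarith)
    rw [m3]
    have : 1 + (1/2 + s) - 1 = s + 1/2 := by ring
    rw [this]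
    exact max_eq_right (by linarith)

private lemma two_pow_mono {a b : ℕ} (h : a ≤ b) : (2:ℝ)^a ≤ 2^b :=
  pow_le_pow_right₀ one_le_two h

private lemma aux_main (M k : ℕ) {n : ℕ} (φ : AbTerm n) (h : φ.depth ≤ k)
    (a : Fin n → ℝ)
    (ha : ∀ i, a i ∈ Set.Icc (-(2 ^ M : ℝ)) (2 ^ M)) :
    |φ.evalR a| ≤ 2 ^ (M + φ.depth) ∧
    φ.tauEval (fun i => a i / 2 ^ (M + k + 1) + 1 / 2) =
      φ.evalR a / 2 ^ (M + k + 1) + 1 / 2 := by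
  have hDpos : (0:ℝ) < 2 ^ (M + k + 1) := by positivity
  induction φ with
  | var i =>
    refine ⟨?_, rfl⟩
    rw [abs_le]
    simpa [AbTerm.evalR, AbTerm.depth] using ha i
  | zero =>
    constructor
    · simp only [AbTerm.evalR, AbTerm.depth, abs_zero]
      positivity
    · simp [AbTerm.evalR, AbTerm.tauEval]
  | neg φ ih =>
    have hd : φ.depth + 1 ≤ k := by simpa [AbTerm.depth] using h
    obtain ⟨hb, he⟩ := ih (by omega)
    constructor
    · simp only [AbTerm.evalR, AbTerm.depth, abs_neg]
      exact hb.trans (two_pow_mono (by omega))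
    · simp only [AbTerm.tauEval, AbTerm.evalR, he]
      field_simp
      ring
  | add φ ψ ihφ ihψ =>
    have hd : max φ.depth ψ.depth + 1 ≤ k := by simpa [AbTerm.depth] using h
    obtain ⟨hbφ, heφ⟩ := ihφ (by omega)
    obtain ⟨hbψ, heψ⟩ := ihψ (by omega)
    have h1 : (2:ℝ) ^ (M + φ.depth) ≤ 2 ^ (M + k) / 2 := by
      rw [le_div_iff₀ (by norm_num)]
      calc (2:ℝ)^(M + φ.depth) * 2 = 2 ^ (M + φ.depth + 1) := by ring
        _ ≤ 2 ^ (M + k) := two_pow_mono (by omega)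
    have h2 : (2:ℝ) ^ (M + ψ.depth) ≤ 2 ^ (M + k) / 2 := by
      rw [le_div_iff₀ (by norm_num)]
      calc (2:ℝ)^(M + ψ.depth) * 2 = 2 ^ (M + ψ.depth + 1) := by ring
        _ ≤ 2 ^ (M + k) := two_pow_mono (by omega)
    have habs : |φ.evalR a + ψ.evalR a| ≤ 2 ^ (M + k) := by
      calc |φ.evalR a + ψ.evalR a| ≤ |φ.evalR a| + |ψ.evalR a| := abs_add_le _ _
        _ ≤ 2 ^ (M + k) / 2 + 2 ^ (M + k) / 2 :=
            add_le_add (hbφ.trans h1) (hbψ.trans h2)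
        _ = 2 ^ (M + k) := by ring
    constructor
    · simp only [AbTerm.evalR, AbTerm.depth]
      have e1 := two_pow_mono (show M + φ.depth ≤ M + max φ.depth ψ.depth by omega)
      have e2 := two_pow_mono (show M + ψ.depth ≤ M + max φ.depth ψ.depth by omega)
      calc |φ.evalR a + ψ.evalR a| ≤ |φ.evalR a| + |ψ.evalR a| := abs_add_le _ _
        _ ≤ 2 ^ (M + max φ.depth ψ.depth) + 2 ^ (M + max φ.depth ψ.depth) :=
            add_le_add (hbφ.trans e1) (hbψ.trans e2)
        _ = 2 ^ (M + (max φ.depth ψ.depth + 1)) := by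
            rw [show M + (max φ.depth ψ.depth + 1) = (M + max φ.depth ψ.depth) + 1 from by
              omega, pow_succ]
            ring
    · simp only [AbTerm.tauEval, AbTerm.evalR, heφ, heψ]
      set s : ℝ := (φ.evalR a + ψ.evalR a) / 2 ^ (M + k + 1) with hs
      have hD : (2:ℝ) ^ (M + k + 1) = 2 ^ (M + k) * 2 := pow_succ 2 (M + k)
      have hsabs : |s| ≤ 1 / 2 := by
        rw [hs, abs_div, abs_of_pos hDpos, div_le_div_iff₀ hDpos (by norm_num), hD]
        nlinarith [habs]
      rw [abs_le] at hsabs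
      have hxy : φ.evalR a / 2 ^ (M + k + 1) + 1 / 2 +
          (ψ.evalR a / 2 ^ (M + k + 1) + 1 / 2) = s + 1 := by
        rw [hs]; field_simp; ring
      rw [hxy, key_add (by linarith [hsabs.1]) hsabs.2]
  | inf φ ψ ihφ ihψ =>
    have hd : max φ.depth ψ.depth + 1 ≤ k := by simpa [AbTerm.depth] using h
    obtain ⟨hbφ, heφ⟩ := ihφ (by omega)
    obtain ⟨hbψ, heψ⟩ := ihψ (by omega)
    rw [abs_le] at hbφ hbψ
    have e1 := two_pow_mono (show M + φ.depth ≤ M + (max φ.depth ψ.depth + 1) by omega)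
    have e2 := two_pow_mono (show M + ψ.depth ≤ M + (max φ.depth ψ.depth + 1) by omega)
    constructor
    · simp only [AbTerm.evalR, AbTerm.depth]
      rw [abs_le]
      constructor
      · rcases min_choice (φ.evalR a) (ψ.evalR a) with hm | hm <;> rw [hm] <;>
          linarith [hbφ.1, hbψ.1]
      · rcases min_choice (φ.evalR a) (ψ.evalR a) with hm | hm <;> rw [hm] <;>
          linarith [hbφ.2, hbψ.2]
    · simp only [AbTerm.tauEval, AbTerm.evalR, heφ, heψ]
      rcases le_total (φ.evalR a) (ψ.evalR a) with hpq | hpq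
      · rw [min_eq_left (by gcongr), min_eq_left hpq]
      · rw [min_eq_right (by gcongr), min_eq_right hpq]
  | sup φ ψ ihφ ihψ =>
    have hd : max φ.depth ψ.depth + 1 ≤ k := by simpa [AbTerm.depth] using h
    obtain ⟨hbφ, heφ⟩ := ihφ (by omega)
    obtain ⟨hbψ, heψ⟩ := ihψ (by omega)
    rw [abs_le] at hbφ hbψ
    have e1 := two_pow_mono (show M + φ.depth ≤ M + (max φ.depth ψ.depth + 1) by omega)
    have e2 := two_pow_mono (show M + ψ.depth ≤ M + (max φ.depth ψ.depth + 1) by omega)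
    constructor
    · simp only [AbTerm.evalR, AbTerm.depth]
      rw [abs_le]
      constructor
      · rcases max_choice (φ.evalR a) (ψ.evalR a) with hm | hm <;> rw [hm] <;>
          linarith [hbφ.1, hbψ.1]
      · rcases max_choice (φ.evalR a) (ψ.evalR a) with hm | hm <;> rw [hm] <;>
          linarith [hbφ.2, hbψ.2]
    · simp only [AbTerm.tauEval, AbTerm.evalR, heφ, heψ]
      rcases le_total (φ.evalR a) (ψ.evalR a) with hpq | hpq
      · rw [max_eq_right (by gcongr), max_eq_right hpq]
      · rw [max_eq_left (by gcongr), max_eq_left hpq]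

theorem tau_commutes_with_rMk (M k : ℕ) {n : ℕ} (φ : AbTerm n) (l : ℕ)
    (hl : φ.depth = l) (hlk : l ≤ k) (a : Fin n → ℝ)
    (ha : ∀ i, a i ∈ Set.Icc (-(2 ^ M : ℝ)) (2 ^ M)) :
    φ.tauEval (fun i => a i / 2 ^ (M + k + 1) + 1 / 2) =
      φ.evalR a / 2 ^ (M + k + 1) + 1 / 2 ∧
    φ.evalR a / 2 ^ (M + k + 1) + 1 / 2 ∈
      Set.Icc (1 / 2 - 1 / 2 ^ (k - l + 1) : ℝ) (1 / 2 + 1 / 2 ^ (k - l + 1)) := by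
  obtain ⟨hb, he⟩ := aux_main M k φ (hl ▸ hlk) a ha
  refine ⟨he, ?_⟩
  have hDpos : (0:ℝ) < 2 ^ (M + k + 1) := by positivity
  have heq : (2:ℝ) ^ (M + l) / 2 ^ (M + k + 1) = 1 / 2 ^ (k - l + 1) := by
    rw [div_eq_div_iff hDpos.ne' (by positivity), one_mul, ← pow_add]
    congr 1
    omega
  have habs : |φ.evalR a / 2 ^ (M + k + 1)| ≤ 1 / 2 ^ (k - l + 1) := by
    rw [abs_div, abs_of_pos hDpos, ← heq]
    gcongr
    exact hl ▸ hb
  rw [abs_le] at habs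
  rw [Set.mem_Icc]
  constructor <;> linarith [habs.1, habs.2]
end

section
/- With $\tau$ and $r_{M,k}$ as in the translation of $\ell$-group terms to MV-terms: if $\phi, \psi$ are $\ell$-group terms of depth at most $k$ and $a_1,\dots,a_n \in [-2^M, 2^M]$, then $f_\phi(a_1,\dots,a_n) = f_\psi(a_1,\dots,a_n)$ holds in the real $\ell$-group if and only if $f_{\tau(\phi)}(r_{M,k}(a_1),\dots,r_{M,k}(a_n)) = f_{\tau(\psi)}(r_{M,k}(a_1),\dots,r_{M,k}(a_n))$ holds in the standard MV-algebra with $1/2$. -/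
/-!
A term of depth at most `k` evaluated at arguments in `[-2^M, 2^M]` stays in `[-2^(M+k), 2^(M+k)]`.
After the affine rescaling `r x = x / 2^(M+k+1) + 1/2` every intermediate value therefore lies in
`[1/4, 3/4]`, where none of the truncations of the Łukasiewicz operations is active: `¬`, `∧`, `∨`
and the `τ`-image of `+` become `1 - x`, `min`, `max` and `s + t - 1/2`, so `r` commutes with
evaluation. Injectivity of `r` then transfers identities in both directions.
-/

namespace AbTerm

variable {n : ℕ}

lemma abs_evalR_le {B : ℝ} (hB : 0 ≤ B) {a : Fin n → ℝ} (ha : ∀ i, |a i| ≤ B) :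
    ∀ φ : AbTerm n, |φ.evalR a| ≤ 2 ^ φ.depth * B
  | var i => by simpa [evalR, depth] using ha i
  | zero => by simp [evalR, depth, hB]
  | neg φ => by
      simp only [evalR, depth, abs_neg]
      calc |φ.evalR a| ≤ 2 ^ φ.depth * B := abs_evalR_le hB ha φ
        _ ≤ 2 ^ (φ.depth + 1) * B := by gcongr <;> norm_num
  | add φ ψ => by
      have hφ : 2 ^ φ.depth * B ≤ 2 ^ max φ.depth ψ.depth * B := by
        gcongr <;> [norm_num; omega]
      have hψ : 2 ^ ψ.depth * B ≤ 2 ^ max φ.depth ψ.depth * B := by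
        gcongr <;> [norm_num; omega]
      simp only [evalR, depth, pow_succ]
      linarith [abs_add_le (φ.evalR a) (ψ.evalR a), abs_evalR_le hB ha φ, abs_evalR_le hB ha ψ]
  | inf φ ψ => by
      have hφ : 2 ^ φ.depth * B ≤ 2 ^ (max φ.depth ψ.depth + 1) * B := by
        gcongr <;> [norm_num; omega]
      have hψ : 2 ^ ψ.depth * B ≤ 2 ^ (max φ.depth ψ.depth + 1) * B := by
        gcongr <;> [norm_num; omega]
      simp only [evalR, depth]
      exact abs_min_le_max_abs_abs.trans
        (max_le ((abs_evalR_le hB ha φ).trans hφ) ((abs_evalR_le hB ha ψ).trans hψ))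
  | sup φ ψ => by
      have hφ : 2 ^ φ.depth * B ≤ 2 ^ (max φ.depth ψ.depth + 1) * B := by
        gcongr <;> [norm_num; omega]
      have hψ : 2 ^ ψ.depth * B ≤ 2 ^ (max φ.depth ψ.depth + 1) * B := by
        gcongr <;> [norm_num; omega]
      simp only [evalR, depth]
      exact abs_max_le_max_abs_abs.trans
        (max_le ((abs_evalR_le hB ha φ).trans hφ) ((abs_evalR_le hB ha ψ).trans hψ))

/-- `τ(φ + ψ)` evaluates to `(s ⊕ t) ⊙ (1/2 ⊕ (s ⊙ t))`, which is `s + t - 1/2` as long as no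
Łukasiewicz operation truncates. -/
lemma lukasiewicz_add_half_eq {s t : ℝ} (h₁ : 1 / 2 ≤ s + t) (h₂ : s + t ≤ 3 / 2) :
    max 0 (min 1 (s + t) + min 1 (1 / 2 + max 0 (s + t - 1)) - 1) = s + t - 1 / 2 := by
  rcases le_total (s + t) 1 with h | h
  · rw [min_eq_right h, max_eq_left (show s + t - 1 ≤ 0 by linarith), add_zero,
      min_eq_right (show (1 / 2 : ℝ) ≤ 1 by norm_num), max_eq_right (by linarith)]
    ring
  · rw [min_eq_left h, max_eq_right (show 0 ≤ s + t - 1 by linarith),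
      min_eq_right (show 1 / 2 + (s + t - 1) ≤ 1 by linarith), max_eq_right (by linarith)]
    ring

lemma div_add_half_monotone {D : ℝ} (hD : 0 < D) : Monotone fun x : ℝ => x / D + 1 / 2 :=
  fun _ _ h => add_le_add_left (div_le_div_of_nonneg_right h hD.le) _

lemma tauEval_div_add_half {k : ℕ} {B D : ℝ} (hB : 0 ≤ B) (hD : 0 < D)
    (hBD : 2 ^ (k + 1) * B ≤ D) {a : Fin n → ℝ} (ha : ∀ i, |a i| ≤ B) :
    ∀ φ : AbTerm n, φ.depth ≤ k →
      φ.tauEval (fun i => a i / D + 1 / 2) = φ.evalR a / D + 1 / 2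
  | var i, _ => rfl
  | zero, _ => by simp [tauEval, evalR]
  | neg φ, h => by
      have hφ : φ.depth ≤ k := by simp only [depth] at h; omega
      rw [tauEval, evalR, tauEval_div_add_half hB hD hBD ha φ hφ]
      ring
  | add φ ψ, h => by
      have hφ : φ.depth ≤ k := by simp only [depth] at h; omega
      have hψ : ψ.depth ≤ k := by simp only [depth] at h; omega
      have hsum : |(φ.evalR a + ψ.evalR a) / D| ≤ 1 / 2 := by
        rw [abs_div, abs_of_pos hD, div_le_iff₀ hD]
        calc |φ.evalR a + ψ.evalR a| = |(add φ ψ).evalR a| := rfl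
          _ ≤ 2 ^ (add φ ψ).depth * B := abs_evalR_le hB ha _
          _ ≤ 2 ^ k * B := by gcongr; norm_num
          _ ≤ 1 / 2 * D := by rw [pow_succ] at hBD; linarith
      rw [tauEval, evalR, tauEval_div_add_half hB hD hBD ha φ hφ,
        tauEval_div_add_half hB hD hBD ha ψ hψ]
      rw [add_div] at hsum
      rw [add_div, lukasiewicz_add_half_eq (by linarith [(abs_le.mp hsum).1])
        (by linarith [(abs_le.mp hsum).2])]
      ring
  | inf φ ψ, h => by
      have hφ : φ.depth ≤ k := by simp only [depth] at h; omega
      have hψ : ψ.depth ≤ k := by simp only [depth] at h; omega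
      rw [tauEval, evalR, tauEval_div_add_half hB hD hBD ha φ hφ,
        tauEval_div_add_half hB hD hBD ha ψ hψ]
      exact ((div_add_half_monotone hD).map_min).symm
  | sup φ ψ, h => by
      have hφ : φ.depth ≤ k := by simp only [depth] at h; omega
      have hψ : ψ.depth ≤ k := by simp only [depth] at h; omega
      rw [tauEval, evalR, tauEval_div_add_half hB hD hBD ha φ hφ,
        tauEval_div_add_half hB hD hBD ha ψ hψ]
      exact ((div_add_half_monotone hD).map_max).symm

end AbTerm

theorem tau_preserves_and_reflects_identities (M k : ℕ) {n : ℕ}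
    (φ ψ : AbTerm n) (hφ : φ.depth ≤ k) (hψ : ψ.depth ≤ k) (a : Fin n → ℝ)
    (ha : ∀ i, a i ∈ Set.Icc (-(2 ^ M : ℝ)) (2 ^ M)) :
    φ.evalR a = ψ.evalR a ↔
      φ.tauEval (fun i => a i / 2 ^ (M + k + 1) + 1 / 2) =
        ψ.tauEval (fun i => a i / 2 ^ (M + k + 1) + 1 / 2) := by
  have hD : (0 : ℝ) < 2 ^ (M + k + 1) := by positivity
  have hBD : (2 : ℝ) ^ (k + 1) * 2 ^ M ≤ 2 ^ (M + k + 1) := by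
    rw [← pow_add, Nat.add_right_comm, Nat.add_comm k]
  have ha' : ∀ i, |a i| ≤ 2 ^ M := fun i => abs_le.mpr (ha i)
  rw [AbTerm.tauEval_div_add_half (by positivity) hD hBD ha' φ hφ,
    AbTerm.tauEval_div_add_half (by positivity) hD hBD ha' ψ hψ, add_left_inj,
    div_left_inj' hD.ne']
end

section
/- Let $\delta$ be the translation from MV-terms to pointed $\ell$-group terms defined by: $\delta(x) = (x \lor -1) \land 0$; $\delta(\phi \to \xi) = (\delta(\xi) - \delta(\phi)) \land 0$; $\delta(\phi \otimes \psi) = (\delta(\phi) + \delta(\psi)) \lor -1$; $\delta(0) = -1$; $\delta(1) = 0$; $\delta$ commutes with $\land$ and $\lor$. Then for every MV-term $\phi(x_1,\dots,x_n)$ and all $a_1,\dots,a_n \in [0,1]$: $f_{\delta(\phi)}(a_1 - 1, \dots, a_n - 1) + 1 = f_\phi(a_1,\dots,a_n)$. -/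
/-- MV-terms in `n` variables. -/
inductive MVTerm (n : ℕ) where
  | var    : Fin n → MVTerm n
  | zero   : MVTerm n
  | one    : MVTerm n
  | imp    : MVTerm n → MVTerm n → MVTerm n
  | otimes : MVTerm n → MVTerm n → MVTerm n
  | inf    : MVTerm n → MVTerm n → MVTerm n
  | sup    : MVTerm n → MVTerm n → MVTerm n

namespace MVTerm

/-- The term function on the standard MV-algebra `[0,1]`. -/
noncomputable def mvEval {n : ℕ} : MVTerm n → (Fin n → ℝ) → ℝ
  | var i, v => v i
  | zero, _ => 0
  | one, _ => 1
  | imp φ ψ, v => min 1 (1 - φ.mvEval v + ψ.mvEval v)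
  | otimes φ ψ, v => max 0 (φ.mvEval v + ψ.mvEval v - 1)
  | inf φ ψ, v => min (φ.mvEval v) (ψ.mvEval v)
  | sup φ ψ, v => max (φ.mvEval v) (ψ.mvEval v)

/-- The term function `f_{δ(φ)}` of the translated term on the pointed
ℓ-group `⟨ℝ, +, -, min, max, 0, -1⟩` (computed compositionally following
the clauses of the translation `δ`). -/
noncomputable def deltaEval {n : ℕ} : MVTerm n → (Fin n → ℝ) → ℝ
  | var i, v => min (max (v i) (-1)) 0
  | zero, _ => -1
  | one, _ => 0
  | imp φ ψ, v => min (ψ.deltaEval v - φ.deltaEval v) 0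
  | otimes φ ψ, v => max (φ.deltaEval v + ψ.deltaEval v) (-1)
  | inf φ ψ, v => min (φ.deltaEval v) (ψ.deltaEval v)
  | sup φ ψ, v => max (φ.deltaEval v) (ψ.deltaEval v)

end MVTerm

theorem delta_shifts_term_functions {n : ℕ} (φ : MVTerm n) (a : Fin n → ℝ)
    (ha : ∀ i, a i ∈ Set.Icc (0 : ℝ) 1) :
    φ.deltaEval (fun i => a i - 1) + 1 = φ.mvEval a := by
  induction φ with
  | var i =>
    obtain ⟨h0, h1⟩ := ha i
    simp only [MVTerm.deltaEval, MVTerm.mvEval]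
    rw [max_eq_left (by linarith), min_eq_left (by linarith)]
    ring
  | zero => simp [MVTerm.deltaEval, MVTerm.mvEval]
  | one => simp [MVTerm.deltaEval, MVTerm.mvEval]
  | imp φ ψ ihφ ihψ =>
    simp only [MVTerm.deltaEval, MVTerm.mvEval] at *
    rw [← ihφ, ← ihψ]
    rcases le_total (ψ.deltaEval (fun i => a i - 1) - φ.deltaEval (fun i => a i - 1)) 0 with h | h <;>
      [rw [min_eq_left h, min_eq_right (by linarith)]; rw [min_eq_right h, min_eq_left (by linarith)]] <;> ring
  | otimes φ ψ ihφ ihψ =>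
    simp only [MVTerm.deltaEval, MVTerm.mvEval] at *
    rw [← ihφ, ← ihψ]
    rcases le_total (φ.deltaEval (fun i => a i - 1) + ψ.deltaEval (fun i => a i - 1)) (-1) with h | h <;>
      [rw [max_eq_right h, max_eq_left (by linarith)]; rw [max_eq_left h, max_eq_right (by linarith)]] <;> ring
  | inf φ ψ ihφ ihψ =>
    simp only [MVTerm.deltaEval, MVTerm.mvEval] at *
    rw [← ihφ, ← ihψ, ← min_add_add_right]
  | sup φ ψ ihφ ihψ =>
    simp only [MVTerm.deltaEval, MVTerm.mvEval] at *
    rw [← ihφ, ← ihψ, ← max_add_add_right]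
end

section
/- With $\delta$ the translation from MV-terms to pointed $\ell$-group terms: for MV-terms $\phi, \psi$ in $n$ variables and $a_1,\dots,a_n \in [0,1]$, the identity $f_\phi(a_1,\dots,a_n) = f_\psi(a_1,\dots,a_n)$ holds in the standard MV-algebra if and only if $f_{\delta(\phi)}(a_1-1,\dots,a_n-1) = f_{\delta(\psi)}(a_1-1,\dots,a_n-1)$ holds in $\langle \mathbb{R},+,-,\min,\max,0,-1\rangle$. -/
theorem delta_preserves_and_reflects_identities {n : ℕ} (φ ψ : MVTerm n)
    (a : Fin n → ℝ) (ha : ∀ i, a i ∈ Set.Icc (0 : ℝ) 1) :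
    φ.mvEval a = ψ.mvEval a ↔
      φ.deltaEval (fun i => a i - 1) = ψ.deltaEval (fun i => a i - 1) := by
  have key : ∀ χ : MVTerm n, χ.deltaEval (fun i => a i - 1) + 1 = χ.mvEval a := by
    intro χ
    induction χ with
    | var i =>
        have h := ha i
        simp only [MVTerm.deltaEval, MVTerm.mvEval]
        rw [max_eq_left (by linarith [h.1]), min_eq_left (by linarith [h.2])]
        ring
    | zero => simp [MVTerm.deltaEval, MVTerm.mvEval]
    | one => simp [MVTerm.deltaEval, MVTerm.mvEval]
    | imp φ ψ ihφ ihψ =>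
        simp only [MVTerm.deltaEval, MVTerm.mvEval, ← ihφ, ← ihψ]
        set x := φ.deltaEval (fun i => a i - 1)
        set y := ψ.deltaEval (fun i => a i - 1)
        rcases le_total (y - x) 0 with h | h
        · rw [min_eq_left h, min_eq_right (by linarith)]; ring
        · rw [min_eq_right h, min_eq_left (by linarith)]; ring
    | otimes φ ψ ihφ ihψ =>
        simp only [MVTerm.deltaEval, MVTerm.mvEval, ← ihφ, ← ihψ]
        set x := φ.deltaEval (fun i => a i - 1)
        set y := ψ.deltaEval (fun i => a i - 1)
        rcases le_total (x + y) (-1) with h | h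
        · rw [max_eq_right h, max_eq_left (by linarith)]; ring
        · rw [max_eq_left h, max_eq_right (by linarith)]; ring
    | inf φ ψ ihφ ihψ =>
        simp only [MVTerm.deltaEval, MVTerm.mvEval, ← ihφ, ← ihψ, min_add_add_right]
    | sup φ ψ ihφ ihψ =>
        simp only [MVTerm.deltaEval, MVTerm.mvEval, ← ihφ, ← ihψ, max_add_add_right]
  rw [← key φ, ← key ψ]
  constructor <;> intro h <;> linarith
end

section
/- Fix nonnegative integers $M, k$, and let $r_{M,k}(a) = a/2^{M+k+1} + 1/2$. For any MV-term $\phi(x_1,\dots,x_n)$ and any $a_1,\dots,a_n \in [-1,0]$: the assignment $x_i \mapsto a_i$ satisfies a term identity $\delta(\phi) = \delta(\psi)$ in the pointed $\ell$-group $\langle\mathbb{R},+,-,\min,\max,0,-1\rangle$ if and only if the assignment $x_i \mapsto r_{M,k}(a_i)$, $q \mapsto 1/2 - 1/2^{M+k+1}$ satisfies $\tau_q(\delta(\phi)) = \tau_q(\delta(\psi))$ in the standard MV-algebra with constant $1/2$. -/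
/-- Terms of pointed abelian ℓ-groups in `n` variables. -/
inductive PAbTerm (n : ℕ) where
  | var    : Fin n → PAbTerm n
  | zero   : PAbTerm n
  | negone : PAbTerm n
  | neg    : PAbTerm n → PAbTerm n
  | add    : PAbTerm n → PAbTerm n → PAbTerm n
  | inf    : PAbTerm n → PAbTerm n → PAbTerm n
  | sup    : PAbTerm n → PAbTerm n → PAbTerm n

/-- The syntactic translation `δ` from MV-terms to pointed ℓ-group terms. -/
def MVTerm.delta {n : ℕ} : MVTerm n → PAbTerm n
  | var i => .inf (.sup (.var i) .negone) .zero
  | zero => .negone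
  | one => .zero
  | imp φ ψ => .inf (.add ψ.delta (.neg φ.delta)) .zero
  | otimes φ ψ => .sup (.add φ.delta ψ.delta) .negone
  | inf φ ψ => .inf φ.delta ψ.delta
  | sup φ ψ => .sup φ.delta ψ.delta

/-- The term function `f_{τ_q(χ)}` of the translated pointed ℓ-group term on
the standard MV-algebra with constant `1/2`; the last argument is the value of
the extra variable `q`. -/
noncomputable def PAbTerm.tauqEval {n : ℕ} : PAbTerm n → (Fin n → ℝ) → ℝ → ℝ
  | var i, v, q => min (max (v i) q) (1 / 2)
  | zero, _, _ => 1 / 2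
  | negone, _, q => q
  | neg φ, v, q => 1 - φ.tauqEval v q
  | add φ ψ, v, q =>
      max 0 (min 1 (φ.tauqEval v q + ψ.tauqEval v q) +
        min 1 (1 / 2 + max 0 (φ.tauqEval v q + ψ.tauqEval v q - 1)) - 1)
  | inf φ ψ, v, q => min (φ.tauqEval v q) (ψ.tauqEval v q)
  | sup φ ψ, v, q => max (φ.tauqEval v q) (ψ.tauqEval v q)


/-- The term function on the pointed ℓ-group `⟨ℝ, +, -, min, max, 0, -1⟩`. -/
noncomputable def PAbTerm.pabEval {n : ℕ} : PAbTerm n → (Fin n → ℝ) → ℝ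
  | var i, v => v i
  | zero, _ => 0
  | negone, _ => -1
  | neg φ, v => -(φ.pabEval v)
  | add φ ψ, v => φ.pabEval v + ψ.pabEval v
  | inf φ ψ, v => min (φ.pabEval v) (ψ.pabEval v)
  | sup φ ψ, v => max (φ.pabEval v) (ψ.pabEval v)

lemma aux_bounds {P : ℝ} (h : P ∈ Set.Icc (-1 : ℝ) 0) : -1 ≤ P ∧ P ≤ 0 :=
  ⟨h.1, h.2⟩

lemma aux_mem_imp {P Q : ℝ} (hP : P ∈ Set.Icc (-1 : ℝ) 0)
    (hQ : Q ∈ Set.Icc (-1 : ℝ) 0) : min (Q + -P) 0 ∈ Set.Icc (-1 : ℝ) 0 :=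
  ⟨le_min (by linarith [hP.2, hQ.1]) (by norm_num), min_le_right _ _⟩

lemma aux_mem_otimes {P Q : ℝ} (hP : P ∈ Set.Icc (-1 : ℝ) 0)
    (hQ : Q ∈ Set.Icc (-1 : ℝ) 0) : max (P + Q) (-1) ∈ Set.Icc (-1 : ℝ) 0 :=
  ⟨le_max_right _ _, max_le (by linarith [hP.2, hQ.2]) (by norm_num)⟩

lemma aux_mem_inf {P Q : ℝ} (hP : P ∈ Set.Icc (-1 : ℝ) 0)
    (hQ : Q ∈ Set.Icc (-1 : ℝ) 0) : min P Q ∈ Set.Icc (-1 : ℝ) 0 :=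
  ⟨le_min hP.1 hQ.1, le_trans (min_le_left _ _) hP.2⟩

lemma aux_mem_sup {P Q : ℝ} (hP : P ∈ Set.Icc (-1 : ℝ) 0)
    (hQ : Q ∈ Set.Icc (-1 : ℝ) 0) : max P Q ∈ Set.Icc (-1 : ℝ) 0 :=
  ⟨le_trans hP.1 (le_max_left _ _), max_le hP.2 hQ.2⟩

lemma aux_imp {c P Q : ℝ} (hc0 : 0 < c) (hc : c ≤ 1 / 2)
    (hP : P ∈ Set.Icc (-1 : ℝ) 0) (hQ : Q ∈ Set.Icc (-1 : ℝ) 0) :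
    min (max 0 (min 1 (c * Q + 1 / 2 + (1 - (c * P + 1 / 2))) +
      min 1 (1 / 2 + max 0 (c * Q + 1 / 2 + (1 - (c * P + 1 / 2)) - 1)) - 1))
      (1 / 2) = c * min (Q + -P) 0 + 1 / 2 := by
  obtain ⟨hP1, hP2⟩ := hP
  obtain ⟨hQ1, hQ2⟩ := hQ
  have hcP1 : -c ≤ c * P := by nlinarith
  have hcP2 : c * P ≤ 0 := by nlinarith
  have hcQ1 : -c ≤ c * Q := by nlinarith
  have hcQ2 : c * Q ≤ 0 := by nlinarith
  rcases le_total Q P with h | h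
  · have hqp : c * Q ≤ c * P := by nlinarith
    rw [min_eq_left (by linarith : Q + -P ≤ (0 : ℝ)),
      min_eq_right (by linarith : c * Q + 1 / 2 + (1 - (c * P + 1 / 2)) ≤ 1),
      max_eq_left (by linarith : c * Q + 1 / 2 + (1 - (c * P + 1 / 2)) - 1 ≤ 0),
      min_eq_right (by norm_num : (1 : ℝ) / 2 + 0 ≤ 1),
      max_eq_right (by linarith :
        (0 : ℝ) ≤ c * Q + 1 / 2 + (1 - (c * P + 1 / 2)) + (1 / 2 + 0) - 1),
      min_eq_left (by linarith :
        c * Q + 1 / 2 + (1 - (c * P + 1 / 2)) + (1 / 2 + 0) - 1 ≤ 1 / 2)]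
    ring
  · have hqp : c * P ≤ c * Q := by nlinarith
    rw [min_eq_right (by linarith : (0 : ℝ) ≤ Q + -P),
      min_eq_left (by linarith : 1 ≤ c * Q + 1 / 2 + (1 - (c * P + 1 / 2))),
      max_eq_right (by linarith :
        (0 : ℝ) ≤ c * Q + 1 / 2 + (1 - (c * P + 1 / 2)) - 1),
      min_eq_right (by linarith :
        1 / 2 + (c * Q + 1 / 2 + (1 - (c * P + 1 / 2)) - 1) ≤ 1),
      max_eq_right (by linarith :
        (0 : ℝ) ≤ 1 + (1 / 2 + (c * Q + 1 / 2 + (1 - (c * P + 1 / 2)) - 1)) - 1),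
      min_eq_right (by linarith :
        (1 : ℝ) / 2 ≤ 1 + (1 / 2 + (c * Q + 1 / 2 + (1 - (c * P + 1 / 2)) - 1)) - 1)]
    ring

lemma aux_otimes {c P Q : ℝ} (hc0 : 0 < c) (hc : c ≤ 1 / 2)
    (hP : P ∈ Set.Icc (-1 : ℝ) 0) (hQ : Q ∈ Set.Icc (-1 : ℝ) 0) :
    max (max 0 (min 1 (c * P + 1 / 2 + (c * Q + 1 / 2)) +
      min 1 (1 / 2 + max 0 (c * P + 1 / 2 + (c * Q + 1 / 2) - 1)) - 1))
      (1 / 2 - c) = c * max (P + Q) (-1) + 1 / 2 := by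
  obtain ⟨hP1, hP2⟩ := hP
  obtain ⟨hQ1, hQ2⟩ := hQ
  have hcP1 : -c ≤ c * P := by nlinarith
  have hcP2 : c * P ≤ 0 := by nlinarith
  have hcQ1 : -c ≤ c * Q := by nlinarith
  have hcQ2 : c * Q ≤ 0 := by nlinarith
  have hs1 : min 1 (c * P + 1 / 2 + (c * Q + 1 / 2)) =
      c * P + 1 / 2 + (c * Q + 1 / 2) := min_eq_right (by linarith)
  have hs2 : max 0 (c * P + 1 / 2 + (c * Q + 1 / 2) - 1) = 0 :=
    max_eq_left (by linarith)
  rw [hs1, hs2, min_eq_right (by norm_num : (1 : ℝ) / 2 + 0 ≤ 1)]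
  rcases le_total (P + Q) (-1 : ℝ) with h | h
  · have hpq : c * P + c * Q ≤ -c := by nlinarith
    rw [max_eq_right h,
      max_eq_right (max_le (by linarith : (0 : ℝ) ≤ 1 / 2 - c)
        (by linarith :
          c * P + 1 / 2 + (c * Q + 1 / 2) + (1 / 2 + 0) - 1 ≤ 1 / 2 - c))]
    ring
  · have hpq : -c ≤ c * P + c * Q := by nlinarith
    rw [max_eq_left h,
      max_eq_right (by linarith :
        (0 : ℝ) ≤ c * P + 1 / 2 + (c * Q + 1 / 2) + (1 / 2 + 0) - 1),
      max_eq_left (by linarith :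
        1 / 2 - c ≤ c * P + 1 / 2 + (c * Q + 1 / 2) + (1 / 2 + 0) - 1)]
    ring

lemma aux_inf {c P Q : ℝ} (hc0 : 0 < c) :
    min (c * P + 1 / 2) (c * Q + 1 / 2) = c * min P Q + 1 / 2 := by
  rcases le_total P Q with h | h
  · have hpq : c * P ≤ c * Q := by nlinarith
    rw [min_eq_left h, min_eq_left (by linarith : c * P + 1 / 2 ≤ c * Q + 1 / 2)]
  · have hpq : c * Q ≤ c * P := by nlinarith
    rw [min_eq_right h, min_eq_right (by linarith : c * Q + 1 / 2 ≤ c * P + 1 / 2)]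

lemma aux_sup {c P Q : ℝ} (hc0 : 0 < c) :
    max (c * P + 1 / 2) (c * Q + 1 / 2) = c * max P Q + 1 / 2 := by
  rcases le_total P Q with h | h
  · have hpq : c * P ≤ c * Q := by nlinarith
    rw [max_eq_right h, max_eq_right (by linarith : c * P + 1 / 2 ≤ c * Q + 1 / 2)]
  · have hpq : c * Q ≤ c * P := by nlinarith
    rw [max_eq_left h, max_eq_left (by linarith : c * Q + 1 / 2 ≤ c * P + 1 / 2)]

lemma key_delta_tauq {n : ℕ} (c : ℝ) (hc0 : 0 < c) (hc : c ≤ 1 / 2)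
    (a : Fin n → ℝ) (ha : ∀ i, a i ∈ Set.Icc (-1 : ℝ) 0) (φ : MVTerm n) :
    (φ.delta).pabEval a ∈ Set.Icc (-1 : ℝ) 0 ∧
      (φ.delta).tauqEval (fun i => a i / c⁻¹ + 1 / 2) (1 / 2 - c) =
        c * (φ.delta).pabEval a + 1 / 2 := by
  have hdiv : ∀ x : ℝ, x / c⁻¹ = c * x := by
    intro x; rw [div_eq_mul_inv, inv_inv, mul_comm]
  induction φ with
  | var i =>
    obtain ⟨h1, h2⟩ := ha i
    have hv1 : -c ≤ c * a i := by nlinarith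
    have hv2 : c * a i ≤ 0 := by nlinarith
    simp only [MVTerm.delta, PAbTerm.pabEval, PAbTerm.tauqEval, hdiv]
    rw [max_eq_left h1, min_eq_left h2,
      max_eq_left (by linarith : (1 : ℝ) / 2 - c ≤ c * a i + 1 / 2),
      min_eq_left (by linarith : c * a i + 1 / 2 ≤ (1 : ℝ) / 2),
      max_eq_left (by linarith : (1 : ℝ) / 2 - c ≤ c * a i + 1 / 2),
      min_eq_left (by linarith : c * a i + 1 / 2 ≤ (1 : ℝ) / 2)]
    exact ⟨⟨h1, h2⟩, rfl⟩
  | zero =>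
    simp only [MVTerm.delta, PAbTerm.pabEval, PAbTerm.tauqEval]
    refine ⟨⟨le_refl _, by norm_num⟩, by ring⟩
  | one =>
    simp only [MVTerm.delta, PAbTerm.pabEval, PAbTerm.tauqEval]
    refine ⟨⟨by norm_num, le_refl _⟩, by ring⟩
  | imp φ ψ ihφ ihψ =>
    obtain ⟨hPm, hTφ⟩ := ihφ
    obtain ⟨hQm, hTψ⟩ := ihψ
    simp only [MVTerm.delta, PAbTerm.pabEval, PAbTerm.tauqEval]
    rw [hTφ, hTψ]
    exact ⟨aux_mem_imp hPm hQm, aux_imp hc0 hc hPm hQm⟩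
  | otimes φ ψ ihφ ihψ =>
    obtain ⟨hPm, hTφ⟩ := ihφ
    obtain ⟨hQm, hTψ⟩ := ihψ
    simp only [MVTerm.delta, PAbTerm.pabEval, PAbTerm.tauqEval]
    rw [hTφ, hTψ]
    exact ⟨aux_mem_otimes hPm hQm, aux_otimes hc0 hc hPm hQm⟩
  | inf φ ψ ihφ ihψ =>
    obtain ⟨hPm, hTφ⟩ := ihφ
    obtain ⟨hQm, hTψ⟩ := ihψ
    simp only [MVTerm.delta, PAbTerm.pabEval, PAbTerm.tauqEval]
    rw [hTφ, hTψ]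
    exact ⟨aux_mem_inf hPm hQm, aux_inf hc0⟩
  | sup φ ψ ihφ ihψ =>
    obtain ⟨hPm, hTφ⟩ := ihφ
    obtain ⟨hQm, hTψ⟩ := ihψ
    simp only [MVTerm.delta, PAbTerm.pabEval, PAbTerm.tauqEval]
    rw [hTφ, hTψ]
    exact ⟨aux_mem_sup hPm hQm, aux_sup hc0⟩

theorem delta_identity_iff_tauq_delta_identity (M k : ℕ) {n : ℕ}
    (φ ψ : MVTerm n) (a : Fin n → ℝ)
    (ha : ∀ i, a i ∈ Set.Icc (-1 : ℝ) 0) :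
    (φ.delta).pabEval a = (ψ.delta).pabEval a ↔
      (φ.delta).tauqEval (fun i => a i / 2 ^ (M + k + 1) + 1 / 2)
          (1 / 2 - 1 / 2 ^ (M + k + 1)) =
        (ψ.delta).tauqEval (fun i => a i / 2 ^ (M + k + 1) + 1 / 2)
          (1 / 2 - 1 / 2 ^ (M + k + 1)) := by
  set c : ℝ := 1 / 2 ^ (M + k + 1) with hcdef
  have hc0 : (0 : ℝ) < c := by positivity
  have hc : c ≤ 1 / 2 := by
    rw [hcdef]
    apply div_le_div_of_nonneg_left (by norm_num) (by norm_num)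
    calc (2 : ℝ) = 2 ^ 1 := by norm_num
    _ ≤ 2 ^ (M + k + 1) := by
        apply pow_le_pow_right₀ (by norm_num); omega
  have hcinv : c⁻¹ = (2 : ℝ) ^ (M + k + 1) := by
    rw [hcdef]; simp
  have hφ := key_delta_tauq c hc0 hc a ha φ
  have hψ := key_delta_tauq c hc0 hc a ha ψ
  rw [hcinv] at hφ hψ
  rw [hφ.2, hψ.2]
  constructor
  · intro h; rw [h]
  · intro h
    have := mul_left_cancel₀ (ne_of_gt hc0) (by linarith : c * (φ.delta).pabEval a = c * (ψ.delta).pabEval a)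
    exact this
end
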